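/- Define the GHZ state ψ ∈ ℂ⁸ (indexed by Bool × Bool × Bool) with ψ(0,0,0) = 1/2, ψ(0,1,1) = ψ(1,0,1) = ψ(1,1,0) = −1/2, and all other entries 0. For inputs (a,b,c) ∈ {0,1}³ with a⊕b⊕c = 0, let U = H^a ⊗ H^b ⊗ H^c where H is the 2×2 Hadamard matrix (1/√2)[[1,1],[1,−1]]. Then every basis amplitude (Uψ)(x,y,z) with x⊕y⊕z ≠ a ∨ b ∨ c equals 0. In particular, measuring Uψ in the computational basis yields outcomes (x,y,z) with x⊕y⊕z = a ∨ b ∨ c with probability 1. -/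

import Mathlib

/-!
Up to the normalisation `1/√2` of each Hadamard factor and the `1/2` of the state, every
matrix entry and every amplitude is an integer sign (or zero). Factoring these constants out
turns each amplitude `(Uψ)(x,y,z)` into a positive constant times an integer sum of signs, and
for the losing outcomes these signs cancel: a finite check over `{0,1}⁶`.
-/

noncomputable def Had (t : Bool) : Bool → Bool → ℂ := fun x y =>
  if t then (if x && y then -(1 / Real.sqrt 2) else (1 / Real.sqrt 2))
  else (if x = y then 1 else 0)

noncomputable def ghzState : Bool × Bool × Bool → ℂ := fun p =>
  if p = (false, false, false) then 1/2
  else if p = (false, true, true) ∨ p = (true, false, true) ∨ p = (true, true, false)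
    then -(1/2) else 0

def hadamardSign (t x y : Bool) : ℤ :=
  if t then (if x && y then -1 else 1) else (if x = y then 1 else 0)

noncomputable def hadamardScale (t : Bool) : ℂ :=
  if t then 1 / Real.sqrt 2 else 1

theorem Had_eq_scale_mul_sign (t x y : Bool) :
    Had t x y = hadamardScale t * hadamardSign t x y := by
  cases t <;> simp [Had, hadamardScale, hadamardSign, apply_ite (Int.cast (R := ℂ))]

def ghzSign (p : Bool × Bool × Bool) : ℤ :=
  if p = (false, false, false) then 1
  else if p = (false, true, true) ∨ p = (true, false, true) ∨ p = (true, true, false)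
    then -1 else 0

theorem ghzState_eq_half_mul_sign (p : Bool × Bool × Bool) :
    ghzState p = (1 / 2 : ℂ) * ghzSign p := by
  unfold ghzState ghzSign
  split_ifs <;> simp

theorem sum_hadamardSign_mul_ghzSign_eq_zero : ∀ a b c x y z : Bool,
    xor a (xor b c) = false → xor x (xor y z) ≠ (a || b || c) →
    ∑ x' : Bool, ∑ y' : Bool, ∑ z' : Bool,
      hadamardSign a x x' * hadamardSign b y y' * hadamardSign c z z' *
        ghzSign (x', y', z') = 0 := by
  decide

theorem ghz_quantum_strategy_wins (a b c : Bool) (hvalid : xor a (xor b c) = false)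
    (x y z : Bool) (hbad : xor x (xor y z) ≠ (a || b || c)) :
    (∑ x' : Bool, ∑ y' : Bool, ∑ z' : Bool,
      Had a x x' * Had b y y' * Had c z z' * ghzState (x', y', z')) = 0 := by
  have factor : ∀ x' y' z' : Bool,
      Had a x x' * Had b y y' * Had c z z' * ghzState (x', y', z') =
        hadamardScale a * hadamardScale b * hadamardScale c / 2 *
          ((hadamardSign a x x' * hadamardSign b y y' * hadamardSign c z z' *
            ghzSign (x', y', z') : ℤ) : ℂ) := by
    intro x' y' z'
    rw [Had_eq_scale_mul_sign, Had_eq_scale_mul_sign, Had_eq_scale_mul_sign,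
      ghzState_eq_half_mul_sign]
    push_cast
    ring
  simp only [factor, ← Finset.mul_sum]
  rw_mod_cast [sum_hadamardSign_mul_ghzSign_eq_zero a b c x y z hvalid hbad, mul_zero]
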